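/- Let Ω ⊆ ℝⁿ be open and let (Aₘ)_{m∈ℕ} be any sequence of subsets of Ω. Then the relative (p(·),ϑ)-capacity is countably subadditive: cap_{p,ϑ}(⋃_{m=1}^∞ Aₘ, Ω) ≤ Σ_{m=1}^∞ cap_{p,ϑ}(Aₘ, Ω). -/

import Mathlib

/-! For two compact sets with admissible functions `f₁, f₂` and any `c > 1`, the smoothed maximum
of `c f₁` and `c f₂` is admissible for `K₁ ∪ K₂`; its gradient is a convex combination of
`c Df₁` and `c Df₂`, so its modular is at most `c ^ p⁺` times the sum of the two modulars, and
letting `c → 1` gives finite subadditivity on compact sets. A compact subset of a union of open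
sets splits into compact pieces lying in finitely many of them, which gives countable
subadditivity on open sets, and arbitrary sets are handled by open neighbourhoods whose
capacities exceed those of the `Aᵢ` by a summable family `εᵢ`. -/

open MeasureTheory Metric Set Filter ENNReal

noncomputable section

/-- The weighted variable exponent modular `ρ_{p,ϑ,A}(g) = ∫_A |g|^{p(x)} ϑ(x) dx`. -/
def rhoMod {n : ℕ} (p ϑ : EuclideanSpace ℝ (Fin n) → ℝ)
    (A : Set (EuclideanSpace ℝ (Fin n))) (g : EuclideanSpace ℝ (Fin n) → ℝ) : ℝ≥0∞ :=
  ∫⁻ x in A, ENNReal.ofReal (|g x| ^ p x * ϑ x)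

/-- Relative `(p(·),ϑ)`-capacity of a compact set `K` with respect to an open set `Ω`:
the infimum of `ρ_{p,ϑ,Ω}(‖Df‖)` over `C¹` functions with compact support contained in `Ω`
which are `≥ 1` on `K` (with `sInf ∅ = ∞`). -/
def relCapK {n : ℕ} (p ϑ : EuclideanSpace ℝ (Fin n) → ℝ)
    (K Ω : Set (EuclideanSpace ℝ (Fin n))) : ℝ≥0∞ :=
  sInf ((fun f => rhoMod p ϑ Ω fun x => ‖fderiv ℝ f x‖) ''
    {f : EuclideanSpace ℝ (Fin n) → ℝ |
      ContDiff ℝ 1 f ∧ IsCompact (tsupport f) ∧ tsupport f ⊆ Ω ∧ ∀ x ∈ K, 1 ≤ f x})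

/-- Relative capacity of an open subset `U ⊆ Ω`. -/
def relCapO {n : ℕ} (p ϑ : EuclideanSpace ℝ (Fin n) → ℝ)
    (U Ω : Set (EuclideanSpace ℝ (Fin n))) : ℝ≥0∞ :=
  ⨆ (K : Set (EuclideanSpace ℝ (Fin n))) (_ : IsCompact K ∧ K ⊆ U), relCapK p ϑ K Ω

/-- Relative capacity of an arbitrary subset `A ⊆ Ω`. -/
def relCap {n : ℕ} (p ϑ : EuclideanSpace ℝ (Fin n) → ℝ)
    (A Ω : Set (EuclideanSpace ℝ (Fin n))) : ℝ≥0∞ :=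
  ⨅ (U : Set (EuclideanSpace ℝ (Fin n))) (_ : IsOpen U ∧ A ⊆ U ∧ U ⊆ Ω), relCapO p ϑ U Ω

/-- The Sobolev `(p(·),ϑ)`-capacity of `A ⊆ ℝⁿ`. -/
def sobCap {n : ℕ} (p ϑ : EuclideanSpace ℝ (Fin n) → ℝ)
    (A : Set (EuclideanSpace ℝ (Fin n))) : ℝ≥0∞ :=
  sInf ((fun f => ∫⁻ x, ENNReal.ofReal ((|f x| ^ p x + ‖fderiv ℝ f x‖ ^ p x) * ϑ x)) ''
    {f : EuclideanSpace ℝ (Fin n) → ℝ |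
      ContDiff ℝ 1 f ∧ ∃ U, IsOpen U ∧ A ⊆ U ∧ ∀ x ∈ U, 1 ≤ f x})

/-- The weighted measure `μ_ϑ(A) = ∫_A ϑ(x) dx`. -/
def muW {n : ℕ} (ϑ : EuclideanSpace ℝ (Fin n) → ℝ)
    (A : Set (EuclideanSpace ℝ (Fin n))) : ℝ≥0∞ :=
  ∫⁻ x in A, ENNReal.ofReal (ϑ x)

/-- `μ_ϑ` is doubling with constant `cd`. -/
def DoublingW {n : ℕ} (ϑ : EuclideanSpace ℝ (Fin n) → ℝ) (cd : ℝ) : Prop :=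
  1 ≤ cd ∧ ∀ (x : EuclideanSpace ℝ (Fin n)) (r : ℝ), 0 < r →
    muW ϑ (ball x (2 * r)) ≤ ENNReal.ofReal cd * muW ϑ (ball x r)

/-- Poincaré hypothesis with constant `c` for the weight `ϑ`. -/
def PoincareHyp {n : ℕ} (ϑ : EuclideanSpace ℝ (Fin n) → ℝ) (c : ℝ) : Prop :=
  ∀ Ω : Set (EuclideanSpace ℝ (Fin n)), IsOpen Ω → Bornology.IsBounded Ω →
    ∀ f : EuclideanSpace ℝ (Fin n) → ℝ, ContDiff ℝ 1 f → IsCompact (tsupport f) →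
      tsupport f ⊆ Ω →
      ∫ x in Ω, |f x| * ϑ x ≤ c * diam Ω * ∫ x in Ω, ‖fderiv ℝ f x‖ * ϑ x

/-- Embedding hypothesis `L^{p(·)}_ϑ(Ω) ↪ L¹_ϑ(Ω)` with constants `c₁ Ω`. -/
def EmbeddingHyp {n : ℕ} (p ϑ : EuclideanSpace ℝ (Fin n) → ℝ)
    (c₁ : Set (EuclideanSpace ℝ (Fin n)) → ℝ) : Prop :=
  ∀ Ω : Set (EuclideanSpace ℝ (Fin n)), IsOpen Ω → Bornology.IsBounded Ω →
    0 < c₁ Ω ∧ ∀ g : EuclideanSpace ℝ (Fin n) → ℝ, Measurable g → 1 ≤ rhoMod p ϑ Ω g →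
      (∫⁻ x in Ω, ENNReal.ofReal (|g x| * ϑ x)) ≤ ENNReal.ofReal (c₁ Ω) * rhoMod p ϑ Ω g

/-- The Wiener sum `W^{sum}_{p,ϑ}(A,x₀)`. -/
def wienerSum {n : ℕ} (p ϑ : EuclideanSpace ℝ (Fin n) → ℝ)
    (A : Set (EuclideanSpace ℝ (Fin n))) (x₀ : EuclideanSpace ℝ (Fin n)) : ℝ≥0∞ :=
  ∑' i : ℕ,
    (relCap p ϑ (A ∩ ball x₀ ((2 : ℝ) ^ (-(i : ℤ)))) (ball x₀ ((2 : ℝ) ^ (1 - (i : ℤ)))) /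
        relCap p ϑ (ball x₀ ((2 : ℝ) ^ (-(i : ℤ)))) (ball x₀ ((2 : ℝ) ^ (1 - (i : ℤ))))) ^
      (1 / (p x₀ - 1))

/-- The Wiener type integral `W_{p,ϑ}(A,x₀)`. -/
def wienerInt {n : ℕ} (p ϑ : EuclideanSpace ℝ (Fin n) → ℝ)
    (A : Set (EuclideanSpace ℝ (Fin n))) (x₀ : EuclideanSpace ℝ (Fin n)) : ℝ≥0∞ :=
  ∫⁻ r in Set.Ioo (0 : ℝ) 1,
    (relCap p ϑ (A ∩ ball x₀ r) (ball x₀ (2 * r)) /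
        relCap p ϑ (ball x₀ r) (ball x₀ (2 * r))) ^ (1 / (p x₀ - 1)) / ENNReal.ofReal r

open scoped Topology

-- `√((s - t) ^ 2 + δ ^ 2)` smooths `|s - t|` in `max s t = (s + t + |s - t|) / 2`.
def smoothMax (δ s t : ℝ) : ℝ := (s + t + √((s - t) ^ 2 + δ ^ 2) - δ) / 2

def smoothMaxWeight (δ s t : ℝ) : ℝ := (1 + (s - t) / √((s - t) ^ 2 + δ ^ 2)) / 2

lemma abs_sub_le_sqrt_sq_add_sq (δ s t : ℝ) : |s - t| ≤ √((s - t) ^ 2 + δ ^ 2) :=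
  Real.abs_le_sqrt (le_add_of_nonneg_right (sq_nonneg δ))

lemma max_sub_half_le_smoothMax (δ s t : ℝ) : max s t - δ / 2 ≤ smoothMax δ s t := by
  have h := abs_le.1 (abs_sub_le_sqrt_sq_add_sq δ s t)
  rw [sub_le_iff_le_add, max_le_iff, smoothMax]
  constructor <;> linarith [h.1, h.2]

lemma smoothMax_zero_zero {δ : ℝ} (hδ : 0 ≤ δ) : smoothMax δ 0 0 = 0 := by
  simp [smoothMax, Real.sqrt_sq hδ]

lemma smoothMaxWeight_mem_Icc (δ s t : ℝ) : smoothMaxWeight δ s t ∈ Icc (0 : ℝ) 1 := by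
  have h : |(s - t) / √((s - t) ^ 2 + δ ^ 2)| ≤ 1 := by
    rw [abs_div, abs_of_nonneg (Real.sqrt_nonneg _)]
    exact div_le_one_of_le₀ (abs_sub_le_sqrt_sq_add_sq δ s t) (Real.sqrt_nonneg _)
  rw [abs_le] at h
  constructor <;> unfold smoothMaxWeight <;> linarith

section

variable {E : Type*} [NormedAddCommGroup E] [NormedSpace ℝ E] {f g : E → ℝ} {δ : ℝ}

theorem ContDiff.smoothMax {k : WithTop ℕ∞} (hf : ContDiff ℝ k f) (hg : ContDiff ℝ k g)
    (hδ : δ ≠ 0) : ContDiff ℝ k fun y => smoothMax δ (f y) (g y) := by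
  have hpos : ∀ y, (f y - g y) ^ 2 + δ ^ 2 ≠ 0 := fun y => by positivity
  exact (((hf.add hg).add ((((hf.sub hg).pow 2).add contDiff_const).sqrt hpos)).sub
    contDiff_const).div_const 2

theorem HasFDerivAt.smoothMax {f' g' : E →L[ℝ] ℝ} {x : E} (hf : HasFDerivAt f f' x)
    (hg : HasFDerivAt g g' x) (hδ : δ ≠ 0) :
    HasFDerivAt (fun y => smoothMax δ (f y) (g y))
      (smoothMaxWeight δ (f x) (g x) • f' + (1 - smoothMaxWeight δ (f x) (g x)) • g') x := by
  have hpos : 0 < (f x - g x) ^ 2 + δ ^ 2 := by positivity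
  have hsqrt := (((hf.sub hg).pow 2).add_const (δ ^ 2)).sqrt hpos.ne'
  have hsmax : (fun y => _root_.smoothMax δ (f y) (g y)) =
      fun y => (f y + g y + √((f y - g y) ^ 2 + δ ^ 2) - δ) * 2⁻¹ := by
    ext y; rw [_root_.smoothMax, div_eq_mul_inv]
  rw [hsmax]
  refine ((((hf.add hg).add hsqrt).sub_const δ).mul_const (2⁻¹ : ℝ)).congr_fderiv ?_
  have := (Real.sqrt_pos.2 hpos).ne'
  ext v
  simp only [Pi.sub_apply, one_div, mul_inv_rev, Nat.add_one_sub_one, pow_one, nsmul_eq_mul,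
    Nat.cast_ofNat, smul_add, add_apply, smul_apply, smul_eq_mul, sub_apply, smoothMaxWeight]
  field_simp
  ring

theorem norm_fderiv_smoothMax_const_mul_le {c : ℝ} (hc : 0 ≤ c) (hδ : δ ≠ 0) {x : E}
    (hf : DifferentiableAt ℝ f x) (hg : DifferentiableAt ℝ g x) :
    ‖fderiv ℝ (fun y => smoothMax δ (c * f y) (c * g y)) x‖ ≤
      c * max ‖fderiv ℝ f x‖ ‖fderiv ℝ g x‖ := by
  rw [((hf.hasFDerivAt.const_mul c).smoothMax (hg.hasFDerivAt.const_mul c) hδ).fderiv,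
    mul_max_of_nonneg _ _ hc, ← norm_smul_of_nonneg hc, ← norm_smul_of_nonneg hc]
  obtain ⟨hθ₀, hθ₁⟩ := smoothMaxWeight_mem_Icc δ (c * f x) (c * g x)
  exact convexOn_univ_norm.le_max_of_mem_segment trivial trivial
    ⟨_, _, hθ₀, sub_nonneg.2 hθ₁, add_sub_cancel _ _, rfl⟩

end

lemma Real.rpow_le_rpow_mul_add_of_le_mul_max {u a b c q C : ℝ} (hu : 0 ≤ u) (ha : 0 ≤ a)
    (hb : 0 ≤ b) (hc : 1 ≤ c) (hq : 0 ≤ q) (hqC : q ≤ C) (h : u ≤ c * max a b) :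
    u ^ q ≤ c ^ C * (a ^ q + b ^ q) := by
  have hmax : max a b ^ q ≤ a ^ q + b ^ q := by
    rcases max_cases a b with ⟨hab, -⟩ | ⟨hab, -⟩ <;> rw [hab]
    · exact le_add_of_nonneg_right (Real.rpow_nonneg hb q)
    · exact le_add_of_nonneg_left (Real.rpow_nonneg ha q)
  calc u ^ q ≤ (c * max a b) ^ q := Real.rpow_le_rpow hu h hq
    _ = c ^ q * max a b ^ q := Real.mul_rpow (by linarith) (le_max_of_le_left ha)
    _ ≤ c ^ C * (a ^ q + b ^ q) := by gcongr

lemma ENNReal.le_of_forall_one_lt_le_ofReal_rpow_mul {x y : ℝ≥0∞} {C : ℝ}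
    (h : ∀ c : ℝ, 1 < c → x ≤ ENNReal.ofReal (c ^ C) * y) : x ≤ y := by
  have hlim : Tendsto (fun c : ℝ => ENNReal.ofReal (c ^ C) * y) (𝓝[>] 1) (𝓝 y) := by
    have hcont : ContinuousAt (fun c : ℝ => ENNReal.ofReal (c ^ C)) 1 :=
      ENNReal.continuous_ofReal.continuousAt.comp
        (Real.continuousAt_rpow_const _ _ (Or.inl one_ne_zero))
    simpa using (ENNReal.Tendsto.mul_const (hcont.tendsto.mono_left nhdsWithin_le_nhds)
      (Or.inl (by simp)) : Tendsto _ _ (𝓝 (ENNReal.ofReal (1 ^ C) * y)))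
  exact ge_of_tendsto hlim (eventually_nhdsWithin_of_forall h)

lemma isBoundedUnder_ge_of_essInf_ne_zero {α : Type*} [MeasurableSpace α] {μ : Measure α}
    {f : α → ℝ} (h : essInf f μ ≠ 0) : IsBoundedUnder (· ≥ ·) (ae μ) f := by
  by_contra hf
  -- otherwise no real is an a.e. lower bound, and `essInf f μ` is the junk value `sSup ∅ = 0`
  have : {a | ∀ᶠ x in ae μ, a ≤ f x} = ∅ :=
    eq_empty_of_forall_notMem fun a ha => hf ⟨a, ha⟩
  rw [essInf, liminf_eq, this, Real.sSup_empty] at h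
  exact h rfl

section RelativeCapacity

variable {n : ℕ} {p ϑ : EuclideanSpace ℝ (Fin n) → ℝ}
  {K K₁ K₂ Ω : Set (EuclideanSpace ℝ (Fin n))}

def capAdmissible (K Ω : Set (EuclideanSpace ℝ (Fin n))) : Set (EuclideanSpace ℝ (Fin n) → ℝ) :=
  {f | ContDiff ℝ 1 f ∧ IsCompact (tsupport f) ∧ tsupport f ⊆ Ω ∧ ∀ x ∈ K, 1 ≤ f x}

lemma relCapK_eq_iInf :
    relCapK p ϑ K Ω = ⨅ f ∈ capAdmissible K Ω, rhoMod p ϑ Ω (‖fderiv ℝ f ·‖) :=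
  sInf_image

lemma relCapK_le_rhoMod {f : EuclideanSpace ℝ (Fin n) → ℝ} (hf : f ∈ capAdmissible K Ω) :
    relCapK p ϑ K Ω ≤ rhoMod p ϑ Ω (‖fderiv ℝ f ·‖) :=
  sInf_le ⟨f, hf, rfl⟩

lemma relCapK_empty (hp : ∀ᵐ x, p x ≠ 0) : relCapK p ϑ ∅ Ω = 0 := by
  have hzero : (0 : EuclideanSpace ℝ (Fin n) → ℝ) ∈ capAdmissible ∅ Ω := by
    refine ⟨contDiff_const, ?_, ?_, fun x hx => hx.elim⟩ <;> simp
  refine le_antisymm ((relCapK_le_rhoMod hzero).trans_eq ?_) zero_le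
  refine lintegral_eq_zero_of_ae_eq_zero (ae_restrict_of_ae ?_)
  filter_upwards [hp] with x hx
  simp [Real.zero_rpow hx]

lemma smoothMax_mem_capAdmissible {f₁ f₂ : EuclideanSpace ℝ (Fin n) → ℝ} {c : ℝ}
    (h₁ : f₁ ∈ capAdmissible K₁ Ω) (h₂ : f₂ ∈ capAdmissible K₂ Ω) (hc : 1 < c) :
    (fun x => smoothMax (c - 1) (c * f₁ x) (c * f₂ x)) ∈ capAdmissible (K₁ ∪ K₂) Ω := by
  obtain ⟨hc₁, hs₁, hΩ₁, hK₁⟩ := h₁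
  obtain ⟨hc₂, hs₂, hΩ₂, hK₂⟩ := h₂
  have hsupp := tsupport_binop_subset (fun s t => smoothMax (c - 1) (c * s) (c * t))
    (by simpa using smoothMax_zero_zero (sub_nonneg.2 hc.le)) f₁ f₂
  refine ⟨(contDiff_const.mul hc₁).smoothMax (contDiff_const.mul hc₂) (sub_ne_zero.2 hc.ne'),
    (hs₁.union hs₂).of_isClosed_subset (isClosed_tsupport _) hsupp,
    hsupp.trans (union_subset hΩ₁ hΩ₂), fun x hx => ?_⟩
  -- on `Kᵢ` the larger argument is at least `c`, and the smoothing costs only `(c - 1) / 2`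
  have hmax : c ≤ max (c * f₁ x) (c * f₂ x) := by
    rcases hx with hx | hx
    · exact le_max_of_le_left (le_mul_of_one_le_right (by linarith) (hK₁ x hx))
    · exact le_max_of_le_right (le_mul_of_one_le_right (by linarith) (hK₂ x hx))
  linarith [max_sub_half_le_smoothMax (c - 1) (c * f₁ x) (c * f₂ x)]

lemma rhoMod_le_rpow_mul_add_of_le_mul_max (hp : Measurable p) (hϑ : AEMeasurable ϑ) {c C : ℝ}
    (hc : 1 ≤ c) (hpC : ∀ᵐ x, 0 ≤ p x ∧ p x ≤ C) {g g₁ g₂ : EuclideanSpace ℝ (Fin n) → ℝ}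
    (hg₁ : Measurable g₁) (hg : ∀ x, |g x| ≤ c * max |g₁ x| |g₂ x|) :
    rhoMod p ϑ Ω g ≤ ENNReal.ofReal (c ^ C) * (rhoMod p ϑ Ω g₁ + rhoMod p ϑ Ω g₂) := by
  have hpoint : ∀ᵐ x, ENNReal.ofReal (|g x| ^ p x * ϑ x) ≤ ENNReal.ofReal (c ^ C) *
      (ENNReal.ofReal (|g₁ x| ^ p x * ϑ x) + ENNReal.ofReal (|g₂ x| ^ p x * ϑ x)) := by
    filter_upwards [hpC] with x ⟨hp0, hpC⟩
    have h := Real.rpow_le_rpow_mul_add_of_le_mul_max (abs_nonneg _) (abs_nonneg _)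
      (abs_nonneg _) hc hp0 hpC (hg x)
    calc ENNReal.ofReal (|g x| ^ p x * ϑ x)
        = ENNReal.ofReal (|g x| ^ p x) * ENNReal.ofReal (ϑ x) :=
          ENNReal.ofReal_mul (by positivity)
      _ ≤ ENNReal.ofReal (c ^ C * (|g₁ x| ^ p x + |g₂ x| ^ p x)) * ENNReal.ofReal (ϑ x) := by
        gcongr
      _ = _ := by
        rw [ENNReal.ofReal_mul (by positivity), ENNReal.ofReal_add (by positivity) (by positivity),
          ENNReal.ofReal_mul (by positivity), ENNReal.ofReal_mul (by positivity)]
        ring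
  have hmeas : AEMeasurable (fun x => ENNReal.ofReal (|g₁ x| ^ p x * ϑ x)) (volume.restrict Ω) :=
    ((hg₁.abs.pow hp).aemeasurable.mul hϑ).ennreal_ofReal.restrict
  calc rhoMod p ϑ Ω g ≤ ∫⁻ x in Ω, ENNReal.ofReal (c ^ C) *
        (ENNReal.ofReal (|g₁ x| ^ p x * ϑ x) + ENNReal.ofReal (|g₂ x| ^ p x * ϑ x)) :=
      lintegral_mono_ae (ae_restrict_of_ae hpoint)
    _ = ENNReal.ofReal (c ^ C) * (rhoMod p ϑ Ω g₁ + rhoMod p ϑ Ω g₂) := by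
      rw [lintegral_const_mul' _ _ ENNReal.ofReal_ne_top, lintegral_add_left' hmeas]
      rfl

lemma relCapK_union_le (hp : Measurable p) (hϑ : AEMeasurable ϑ) {C : ℝ}
    (hpC : ∀ᵐ x, 0 ≤ p x ∧ p x ≤ C) :
    relCapK p ϑ (K₁ ∪ K₂) Ω ≤ relCapK p ϑ K₁ Ω + relCapK p ϑ K₂ Ω := by
  simp only [relCapK_eq_iInf (K := K₁), relCapK_eq_iInf (K := K₂), ENNReal.iInf_add,
    ENNReal.add_iInf]
  refine le_iInf₂ fun f₂ h₂ => le_iInf₂ fun f₁ h₁ => ?_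
  refine ENNReal.le_of_forall_one_lt_le_ofReal_rpow_mul (C := C) fun c hc => ?_
  have hD (x : EuclideanSpace ℝ (Fin n)) := norm_fderiv_smoothMax_const_mul_le (by linarith)
    (sub_ne_zero.2 hc.ne') (h₁.1.differentiable one_ne_zero x) (h₂.1.differentiable one_ne_zero x)
  exact (relCapK_le_rhoMod (smoothMax_mem_capAdmissible h₁ h₂ hc)).trans <|
    rhoMod_le_rpow_mul_add_of_le_mul_max (g₂ := (‖fderiv ℝ f₂ ·‖)) hp hϑ hc.le hpC
      (h₁.1.continuous_fderiv one_ne_zero).norm.measurable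
      fun x => by simpa only [abs_norm] using hD x

lemma relCapK_biUnion_le (hp : Measurable p) (hϑ : AEMeasurable ϑ) {C : ℝ}
    (hpC : ∀ᵐ x, 0 < p x ∧ p x ≤ C) {ι : Type*} (s : Finset ι)
    (K : ι → Set (EuclideanSpace ℝ (Fin n))) :
    relCapK p ϑ (⋃ i ∈ s, K i) Ω ≤ ∑ i ∈ s, relCapK p ϑ (K i) Ω := by
  classical
  induction s using Finset.induction_on with
  | empty => simpa using (relCapK_empty (hpC.mono fun x hx => hx.1.ne')).le
  | insert i s hi ih =>
    rw [Finset.set_biUnion_insert, Finset.sum_insert hi]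
    exact (relCapK_union_le hp hϑ (hpC.mono fun x hx => ⟨hx.1.le, hx.2⟩)).trans (by gcongr)

lemma relCapK_le_relCapO {U : Set (EuclideanSpace ℝ (Fin n))} (hK : IsCompact K) (hKU : K ⊆ U) :
    relCapK p ϑ K Ω ≤ relCapO p ϑ U Ω :=
  le_iSup₂_of_le K ⟨hK, hKU⟩ le_rfl

lemma relCapO_iUnion_le (hp : Measurable p) (hϑ : AEMeasurable ϑ) {C : ℝ}
    (hpC : ∀ᵐ x, 0 < p x ∧ p x ≤ C) {ι : Type*} {U : ι → Set (EuclideanSpace ℝ (Fin n))}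
    (hU : ∀ i, IsOpen (U i)) :
    relCapO p ϑ (⋃ i, U i) Ω ≤ ∑' i, relCapO p ϑ (U i) Ω := by
  refine iSup₂_le fun K ⟨hK, hKU⟩ => ?_
  obtain ⟨s, hs⟩ := hK.elim_finite_subcover U hU hKU
  obtain ⟨L, hLc, hLU, rfl⟩ := hK.finite_compact_cover s U (fun i _ => hU i) hs
  calc relCapK p ϑ (⋃ i ∈ s, L i) Ω ≤ ∑ i ∈ s, relCapK p ϑ (L i) Ω :=
        relCapK_biUnion_le hp hϑ hpC s L
    _ ≤ ∑ i ∈ s, relCapO p ϑ (U i) Ω :=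
        Finset.sum_le_sum fun i _ => relCapK_le_relCapO (hLc i) (hLU i)
    _ ≤ ∑' i, relCapO p ϑ (U i) Ω := ENNReal.sum_le_tsum s

lemma relCap_le_relCapO {A U : Set (EuclideanSpace ℝ (Fin n))} (hU : IsOpen U) (hAU : A ⊆ U)
    (hUΩ : U ⊆ Ω) : relCap p ϑ A Ω ≤ relCapO p ϑ U Ω :=
  iInf₂_le U ⟨hU, hAU, hUΩ⟩

lemma exists_relCapO_lt {A : Set (EuclideanSpace ℝ (Fin n))} {r : ℝ≥0∞}
    (h : relCap p ϑ A Ω < r) :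
    ∃ U, IsOpen U ∧ A ⊆ U ∧ U ⊆ Ω ∧ relCapO p ϑ U Ω < r := by
  simpa only [relCap, iInf_lt_iff, exists_prop, and_assoc] using h

lemma relCap_iUnion_le (hp : Measurable p) (hϑ : AEMeasurable ϑ) {C : ℝ}
    (hpC : ∀ᵐ x, 0 < p x ∧ p x ≤ C) {ι : Type*} [Countable ι]
    (A : ι → Set (EuclideanSpace ℝ (Fin n))) :
    relCap p ϑ (⋃ i, A i) Ω ≤ ∑' i, relCap p ϑ (A i) Ω := by
  refine ENNReal.le_of_forall_pos_le_add fun ε hε hfin => ?_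
  obtain ⟨δ, hδ, hδε⟩ := ENNReal.exists_pos_sum_of_countable' (ENNReal.coe_ne_zero.2 hε.ne') ι
  have hU (i : ι) := exists_relCapO_lt (p := p) (ϑ := ϑ) (A := A i) (Ω := Ω)
    (ENNReal.lt_add_right (ne_top_of_le_ne_top hfin.ne (ENNReal.le_tsum i)) (hδ i).ne')
  choose U hUo hAU hUΩ hUcap using hU
  calc relCap p ϑ (⋃ i, A i) Ω ≤ relCapO p ϑ (⋃ i, U i) Ω :=
        relCap_le_relCapO (isOpen_iUnion hUo) (iUnion_mono hAU) (iUnion_subset hUΩ)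
    _ ≤ ∑' i, relCapO p ϑ (U i) Ω := relCapO_iUnion_le hp hϑ hpC hUo
    _ ≤ ∑' i, (relCap p ϑ (A i) Ω + δ i) := ENNReal.tsum_le_tsum fun i => (hUcap i).le
    _ = ∑' i, relCap p ϑ (A i) Ω + ∑' i, δ i := ENNReal.tsum_add
    _ ≤ ∑' i, relCap p ϑ (A i) Ω + ε := by gcongr

end RelativeCapacity

theorem stmt6_general (n : ℕ) (p ϑ : EuclideanSpace ℝ (Fin n) → ℝ)
    (hp : Measurable p)
    (hpm : 1 < essInf p (volume : Measure (EuclideanSpace ℝ (Fin n))))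
    (hpb : Filter.IsBoundedUnder (· ≤ ·) (ae (volume : Measure (EuclideanSpace ℝ (Fin n)))) p)
    (hϑloc : LocallyIntegrable ϑ (volume : Measure (EuclideanSpace ℝ (Fin n))))
    (Ω : Set (EuclideanSpace ℝ (Fin n))) (A : ℕ → Set (EuclideanSpace ℝ (Fin n))) :
    relCap p ϑ (⋃ m, A m) Ω ≤ ∑' m, relCap p ϑ (A m) Ω := by
  obtain ⟨C, hC⟩ := hpb
  have hp1 : ∀ᵐ x, 1 < p x :=
    ae_lt_of_lt_essInf hpm (isBoundedUnder_ge_of_essInf_ne_zero (zero_lt_one.trans hpm).ne')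
  refine relCap_iUnion_le hp hϑloc.aestronglyMeasurable.aemeasurable (C := C) ?_ A
  filter_upwards [hp1, hC] with x h1 h2 using ⟨zero_lt_one.trans h1, h2⟩

/-- Countable subadditivity of the relative `(p(·),ϑ)`-capacity. -/
theorem stmt6 (n : ℕ) (hn : 1 ≤ n) (p ϑ : EuclideanSpace ℝ (Fin n) → ℝ)
    (hp : Measurable p)
    (hpm : 1 < essInf p (volume : Measure (EuclideanSpace ℝ (Fin n))))
    (hpb : Filter.IsBoundedUnder (· ≤ ·) (ae (volume : Measure (EuclideanSpace ℝ (Fin n)))) p)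
    (hϑpos : ∀ x, 0 < ϑ x)
    (hϑloc : LocallyIntegrable ϑ (volume : Measure (EuclideanSpace ℝ (Fin n))))
    (Ω : Set (EuclideanSpace ℝ (Fin n))) (hΩ : IsOpen Ω) (A : ℕ → Set (EuclideanSpace ℝ (Fin n))) (hAΩ : ∀ m, A m ⊆ Ω) :
    relCap p ϑ (⋃ m, A m) Ω ≤ ∑' m, relCap p ϑ (A m) Ω :=
  stmt6_general n p ϑ hp hpm hpb hϑloc Ω A
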